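/- arXiv:2602.05494 — 3 statements merged into one kernel-verified Lean document; each statement's English description precedes it below -/
import Mathlib

section
/- Define kl3 : ℝ → ℝ by kl3(x) = x − 1 − Real.log x. If 0 < x < 1 < y and kl3(x) = kl3(y), then 1 − x < y − 1. -/
noncomputable def kl3 (x : ℝ) : ℝ := x - 1 - Real.log x

/-!
Write `x = 1 - t`. The series `log (1 + t) - log (1 - t) = 2 ∑ t ^ (2k+1) / (2k+1)` has
leading term `2 t` and positive tail, which says exactly that `kl3 (1 + t) < kl3 (1 - t)`.
Since `kl3` is strictly increasing on `[1, ∞)`, the point `y > 1` with `kl3 y = kl3 (1 - t)`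
must lie beyond `1 + t`.
-/

open Real

theorem Real.two_mul_lt_log_one_add_sub_log_one_sub {t : ℝ} (h0 : 0 < t) (h1 : t < 1) :
    2 * t < log (1 + t) - log (1 - t) := by
  have hsum := hasSum_log_sub_log_of_abs_lt_one (abs_lt.mpr ⟨by linarith, h1⟩)
  have hfirst_two := sum_le_hasSum (Finset.range 2) (fun k _ ↦ by positivity) hsum
  norm_num [Finset.sum_range_succ] at hfirst_two
  nlinarith [pow_pos h0 3]

theorem kl3_strictMonoOn : StrictMonoOn kl3 (Set.Ici 1) := by
  intro a (ha : 1 ≤ a) b (hb : 1 ≤ b) hab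
  have ha0 : 0 < a := by linarith
  have hlog : log (b / a) < b / a - 1 := log_lt_sub_one_of_pos (by positivity)
    (by rw [ne_eq, div_eq_one_iff_eq ha0.ne']; exact hab.ne')
  have hratio : b / a - 1 ≤ b - a := by
    rw [div_sub_one ha0.ne', div_le_iff₀ ha0]
    nlinarith
  rw [log_div (by positivity) ha0.ne'] at hlog
  unfold kl3
  linarith

theorem kl3_one_add_lt_kl3_one_sub {t : ℝ} (h0 : 0 < t) (h1 : t < 1) :
    kl3 (1 + t) < kl3 (1 - t) := by
  unfold kl3
  linarith [two_mul_lt_log_one_add_sub_log_one_sub h0 h1]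

/-- Asymmetry of KL3-induced clipping ranges: the upper range deviates more
from 1 than the lower range. -/
theorem kl3_asymmetry (x y : ℝ) (hx0 : 0 < x) (hx1 : x < 1) (hy : 1 < y)
    (h : kl3 x = kl3 y) : 1 - x < y - 1 := by
  have hreflect : kl3 (1 + (1 - x)) < kl3 y := by
    have := kl3_one_add_lt_kl3_one_sub (t := 1 - x) (by linarith) (by linarith)
    rwa [sub_sub_cancel, h] at this
  have := (kl3_strictMonoOn.lt_iff_lt (Set.mem_Ici.mpr (by linarith))
    (Set.mem_Ici.mpr hy.le)).mp hreflect
  linarith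
end

section
/- Let α be a nonempty finite type and θ : α → ℝ. Define the softmax policy π_θ(b) = Real.exp(θ b) / ∑_{b'} Real.exp(θ b') and the entropy H(θ) = −∑_b π_θ(b) · Real.log(π_θ(b)). Then for every a ∈ α, the function t ↦ H(θ + t • Pi.single a 1) has derivative at t = 0 equal to −π_θ(a) · (Real.log(π_θ(a)) + H(θ)). -/
/-!
Along the line `t ↦ θ + t • v` the softmax moves by `π_b (v_b - ⟨π, v⟩)`, and `x log x` has
derivative `log x + 1`. Summing, the `+ 1` contributes `∑ π_b (v_b - ⟨π, v⟩) = 0`, and the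
`⟨π, v⟩`-part of the remaining sum is `⟨π, v⟩ · H`. For `v = Pi.single a 1` only `b = a` survives.
-/

open Finset

noncomputable def softmax {α : Type*} [Fintype α] (θ : α → ℝ) (b : α) : ℝ :=
  Real.exp (θ b) / ∑ b' : α, Real.exp (θ b')

noncomputable def softmaxEntropy {α : Type*} [Fintype α] (θ : α → ℝ) : ℝ :=
  -∑ b : α, softmax θ b * Real.log (softmax θ b)

section

variable {α : Type*}

lemma hasDerivAt_exp_line (θ v : α → ℝ) (b : α) :
    HasDerivAt (fun t : ℝ => Real.exp ((θ + t • v) b)) (Real.exp (θ b) * v b) 0 := by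
  simpa using (((hasDerivAt_id (0 : ℝ)).mul_const (v b)).const_add (θ b)).exp

variable [Fintype α] [Nonempty α]

lemma sum_exp_pos (θ : α → ℝ) : 0 < ∑ b, Real.exp (θ b) :=
  sum_pos (fun b _ => Real.exp_pos (θ b)) univ_nonempty

lemma softmax_pos (θ : α → ℝ) (b : α) : 0 < softmax θ b :=
  div_pos (Real.exp_pos _) (sum_exp_pos θ)

lemma sum_softmax (θ : α → ℝ) : ∑ b, softmax θ b = 1 := by
  simp only [softmax, ← sum_div]
  exact div_self (sum_exp_pos θ).ne'

lemma hasDerivAt_softmax_line (θ v : α → ℝ) (b : α) :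
    HasDerivAt (fun t : ℝ => softmax (θ + t • v) b)
      (softmax θ b * (v b - ∑ c, softmax θ c * v c)) 0 := by
  have hZ := HasDerivAt.fun_sum (u := univ) fun c _ => hasDerivAt_exp_line θ v c
  have hZ0 := (sum_exp_pos θ).ne'
  refine ((hasDerivAt_exp_line θ v b).fun_div hZ (by simpa using hZ0)).congr_deriv ?_
  simp only [softmax, zero_smul, add_zero, div_mul_eq_mul_div, ← sum_div]
  field_simp

theorem hasDerivAt_softmaxEntropy_line (θ v : α → ℝ) :
    HasDerivAt (fun t : ℝ => softmaxEntropy (θ + t • v))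
      (-∑ b, softmax θ b * (Real.log (softmax θ b) + softmaxEntropy θ) * v b) 0 := by
  have hterm (b : α) :
      HasDerivAt (fun t : ℝ => softmax (θ + t • v) b * Real.log (softmax (θ + t • v) b))
      ((Real.log (softmax θ b) + 1) * (softmax θ b * (v b - ∑ c, softmax θ c * v c))) 0 :=
    (Real.hasDerivAt_mul_log (softmax_pos θ b).ne').comp_of_eq 0 (hasDerivAt_softmax_line θ v b)
      (by simp)
  refine (HasDerivAt.fun_sum (u := univ) fun b _ => hterm b).fun_neg.congr_deriv ?_
  set m := ∑ c, softmax θ c * v c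
  have hL (b : α) : (Real.log (softmax θ b) + 1) * (softmax θ b * (v b - m)) =
      softmax θ b * Real.log (softmax θ b) * v b + softmax θ b * v b
        - m * (softmax θ b * Real.log (softmax θ b)) - m * softmax θ b := by ring
  have hR (b : α) : softmax θ b * (Real.log (softmax θ b) + softmaxEntropy θ) * v b =
      softmax θ b * Real.log (softmax θ b) * v b + softmaxEntropy θ * (softmax θ b * v b) := by ring
  simp only [hL, hR, sum_add_distrib, sum_sub_distrib, ← mul_sum, sum_softmax]
  unfold softmaxEntropy
  ring

end

/-- Entropy gradient: ∂H(θ)/∂θ_a = −π_θ(a)·(log π_θ(a) + H(θ)). -/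
theorem softmax_entropy_partial_deriv {α : Type*} [Fintype α] [Nonempty α]
    [DecidableEq α] (θ : α → ℝ) (a : α) :
    HasDerivAt (fun t : ℝ => softmaxEntropy (θ + t • (Pi.single a 1 : α → ℝ)))
      (-(softmax θ a) * (Real.log (softmax θ a) + softmaxEntropy θ)) 0 := by
  refine (hasDerivAt_softmaxEntropy_line θ (Pi.single a 1)).congr_deriv ?_
  simp [Pi.single_apply]
end

section
/- Define kl3 : ℝ → ℝ by kl3(x) = x − 1 − Real.log x. Let δ > 0 and let S = {x : ℝ | 0 < x ∧ kl3(x) ≤ δ}. Then sInf S and sSup S satisfy: 0 < sInf S < 1 < sSup S, kl3(sInf S) = δ, and kl3(sSup S) = δ. -/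
/-!
`kl3` decreases strictly on `(0, 1]` and increases strictly on `[1, ∞)` (its derivative is
`1 - x⁻¹`), with `kl3 1 = 0`. It exceeds `δ` at `exp (-(δ + 1))` and at `exp (δ + 1)`, so by the
intermediate value theorem it reaches `δ` at some `a < 1` and some `b > 1`; monotonicity on each
side then makes the sublevel set exactly `[a, b]`.
-/

open Set

theorem setOf_lt_and_le_eq_Icc_of_strictAntiOn_of_strictMonoOn {α β : Type*} [LinearOrder α]
    [Preorder β] {f : α → β} {l c a b : α} {δ : β} (hanti : StrictAntiOn f (Ioc l c))
    (hmono : StrictMonoOn f (Ici c)) (ha : a ∈ Ioc l c) (hb : c ≤ b) (hfa : f a = δ)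
    (hfb : f b = δ) : {x | l < x ∧ f x ≤ δ} = Icc a b := by
  ext x
  constructor
  · rintro ⟨hlx, hfx⟩
    constructor
    · by_contra! hxa
      exact (hfa ▸ hanti ⟨hlx, (hxa.trans_le ha.2).le⟩ ha hxa).not_ge hfx
    · by_contra! hbx
      exact (hfb ▸ hmono hb (hb.trans hbx.le) hbx).not_ge hfx
  · rintro ⟨hax, hxb⟩
    refine ⟨ha.1.trans_le hax, ?_⟩
    rcases le_total x c with hxc | hcx
    · exact hfa ▸ hanti.antitoneOn ha ⟨ha.1.trans_le hax, hxc⟩ hax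
    · exact hfb ▸ hmono.monotoneOn hcx hb hxb

lemma kl3_one : kl3 1 = 0 := by simp [kl3]

lemma kl3_exp (t : ℝ) : kl3 (Real.exp t) = Real.exp t - 1 - t := by
  rw [kl3, Real.log_exp]

lemma hasDerivAt_kl3 {x : ℝ} (hx : 0 < x) : HasDerivAt kl3 (1 - x⁻¹) x :=
  ((hasDerivAt_id x).sub_const 1).sub (Real.hasDerivAt_log hx.ne')

lemma continuousOn_kl3 : ContinuousOn kl3 (Ioi 0) :=
  HasDerivAt.continuousOn fun _ hx ↦ hasDerivAt_kl3 hx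

lemma strictAntiOn_kl3 : StrictAntiOn kl3 (Ioc 0 1) := by
  refine strictAntiOn_of_deriv_neg (convex_Ioc 0 1)
    (continuousOn_kl3.mono Ioc_subset_Ioi_self) fun x hx ↦ ?_
  rw [interior_Ioc] at hx
  rw [(hasDerivAt_kl3 hx.1).deriv, sub_neg]
  exact (one_lt_inv₀ hx.1).2 hx.2

lemma strictMonoOn_kl3 : StrictMonoOn kl3 (Ici 1) := by
  refine strictMonoOn_of_deriv_pos (convex_Ici 1)
    (continuousOn_kl3.mono fun _ hx ↦ mem_Ioi.2 (zero_lt_one.trans_le hx)) fun x hx ↦ ?_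
  rw [interior_Ici] at hx
  rw [(hasDerivAt_kl3 (zero_lt_one.trans hx)).deriv, sub_pos]
  exact inv_lt_one_of_one_lt₀ hx

lemma exists_kl3_eq_of_lt_one {δ : ℝ} (hδ : 0 < δ) :
    ∃ a ∈ Ioo 0 1, kl3 a = δ := by
  set x := Real.exp (-(δ + 1))
  have hx : x ∈ Ioo 0 1 := ⟨Real.exp_pos _, Real.exp_lt_one_iff.2 (by linarith)⟩
  have hδx : δ < kl3 x := by
    rw [kl3_exp]
    linarith [Real.exp_pos (-(δ + 1))]
  obtain ⟨a, ha, hfa⟩ := intermediate_value_Ioo' hx.2.le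
    (continuousOn_kl3.mono fun _ hy ↦ hx.1.trans_le hy.1) ⟨kl3_one ▸ hδ, hδx⟩
  exact ⟨a, ⟨hx.1.trans ha.1, ha.2⟩, hfa⟩

lemma exists_kl3_eq_of_one_lt {δ : ℝ} (hδ : 0 < δ) :
    ∃ b, 1 < b ∧ kl3 b = δ := by
  set x := Real.exp (δ + 1)
  have hx : 1 < x := Real.one_lt_exp_iff.2 (by linarith)
  -- `exp t ≥ 1 + t + t² / 2` gives `kl3 (exp t) ≥ t² / 2`, and `(δ + 1)² / 2 > δ`.
  have hδx : δ < kl3 x := by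
    rw [kl3_exp]
    nlinarith [Real.quadratic_le_exp_of_nonneg (x := δ + 1) (by linarith)]
  obtain ⟨b, hb, hfb⟩ := intermediate_value_Ioo hx.le
    (continuousOn_kl3.mono fun _ hy ↦ zero_lt_one.trans_le hy.1) ⟨kl3_one ▸ hδ, hδx⟩
  exact ⟨b, hb.1, hfb⟩

/-- The extrema of the KL3 trust region {x > 0 : kl3 x ≤ δ} lie on either side
of 1 and attain the divergence level δ exactly. -/
theorem kl3_trust_region_extrema (δ : ℝ) (hδ : 0 < δ)
    (S : Set ℝ) (hS : S = {x : ℝ | 0 < x ∧ kl3 x ≤ δ}) :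
    0 < sInf S ∧ sInf S < 1 ∧ 1 < sSup S ∧ kl3 (sInf S) = δ ∧ kl3 (sSup S) = δ := by
  obtain ⟨a, ⟨ha₀, ha₁⟩, hfa⟩ := exists_kl3_eq_of_lt_one hδ
  obtain ⟨b, hb₁, hfb⟩ := exists_kl3_eq_of_one_lt hδ
  have hS_eq : S = Icc a b := hS ▸
    setOf_lt_and_le_eq_Icc_of_strictAntiOn_of_strictMonoOn strictAntiOn_kl3 strictMonoOn_kl3
      ⟨ha₀, ha₁.le⟩ hb₁.le hfa hfb
  have hab : a ≤ b := ha₁.le.trans hb₁.le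
  rw [hS_eq, csInf_Icc hab, csSup_Icc hab]
  exact ⟨ha₀, ha₁, hb₁, hfa, hfb⟩
end
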